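/- arXiv:2509.18129 — 3 statements merged into one kernel-verified Lean document; each statement's English description precedes it below -/
import Mathlib

section
/- Let f = (1/n)∑_{i=1}^n f_i where each f_i : ℝ^p → ℝ is L-smooth, and let f* be a global minimum value of f attained at x*. Then for points x_1, …, x_n ∈ ℝ^p with average x̄ = (1/n)∑_i x_i, ‖(1/n)∑_{i=1}^n ∇f_i(x_i)‖² ≤ (2L²/n)∑_{i=1}^n ‖x_i - x̄‖² + 4L (f(x̄) - f(x*)). -/
open scoped RealInnerProductSpace

/-- Let `f = (1/n)∑ fᵢ` with each `fᵢ` convex and `L`-smooth, and `x*` a global minimizer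
of `f`. Then for points `x₁, …, xₙ` with average `x̄`,
`‖(1/n)∑ ∇fᵢ(xᵢ)‖² ≤ (2L²/n)∑ ‖xᵢ - x̄‖² + 4L (f(x̄) - f(x*))`. -/
theorem stmt_3 {p n : ℕ} (hn : 0 < n) (L : ℝ) (hL : 0 < L)
    (f : Fin n → EuclideanSpace ℝ (Fin p) → ℝ)
    (g : Fin n → EuclideanSpace ℝ (Fin p) → EuclideanSpace ℝ (Fin p))
    (hconv : ∀ i x y, f i x + ⟪g i x, y - x⟫ ≤ f i y)
    (hsmooth : ∀ i x y, f i y ≤ f i x + ⟪g i x, y - x⟫ + L / 2 * ‖y - x‖ ^ 2)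
    (hlip : ∀ i x y, ‖g i x - g i y‖ ≤ L * ‖x - y‖)
    (xstar : EuclideanSpace ℝ (Fin p))
    (hmin : ∀ y, (n : ℝ)⁻¹ * ∑ i, f i xstar ≤ (n : ℝ)⁻¹ * ∑ i, f i y)
    (x : Fin n → EuclideanSpace ℝ (Fin p))
    (xbar : EuclideanSpace ℝ (Fin p)) (hxbar : xbar = (n : ℝ)⁻¹ • ∑ i, x i) :
    ‖(n : ℝ)⁻¹ • ∑ i, g i (x i)‖ ^ 2
      ≤ 2 * L ^ 2 / n * ∑ i, ‖x i - xbar‖ ^ 2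
        + 4 * L * ((n : ℝ)⁻¹ * ∑ i, f i xbar - (n : ℝ)⁻¹ * ∑ i, f i xstar) := by
  have hn' : (0 : ℝ) < n := by exact_mod_cast hn
  set G : EuclideanSpace ℝ (Fin p) := (n : ℝ)⁻¹ • ∑ i, g i (x i) with hG
  set D : EuclideanSpace ℝ (Fin p) := (n : ℝ)⁻¹ • ∑ i, g i xbar with hD
  -- bound ‖G - D‖²
  have h1 : ‖G - D‖ ^ 2 ≤ L ^ 2 / n * ∑ i, ‖x i - xbar‖ ^ 2 := by
    have hGD : G - D = (n : ℝ)⁻¹ • ∑ i, (g i (x i) - g i xbar) := by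
      rw [hG, hD, ← smul_sub, Finset.sum_sub_distrib]
    have h2 : ‖∑ i, (g i (x i) - g i xbar)‖ ≤ ∑ i, ‖g i (x i) - g i xbar‖ :=
      norm_sum_le _ _
    have h3 : (∑ i, ‖g i (x i) - g i xbar‖) ^ 2
        ≤ (n : ℝ) * ∑ i, ‖g i (x i) - g i xbar‖ ^ 2 := by
      have := sq_sum_le_card_mul_sum_sq (s := Finset.univ)
        (f := fun i => ‖g i (x i) - g i xbar‖)
      simpa using this
    have h4 : ∑ i, ‖g i (x i) - g i xbar‖ ^ 2 ≤ L ^ 2 * ∑ i, ‖x i - xbar‖ ^ 2 := by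
      rw [Finset.mul_sum]
      refine Finset.sum_le_sum fun i _ => ?_
      have := hlip i (x i) xbar
      nlinarith [norm_nonneg (g i (x i) - g i xbar), norm_nonneg (x i - xbar)]
    have h5 : ‖G - D‖ = (n : ℝ)⁻¹ * ‖∑ i, (g i (x i) - g i xbar)‖ := by
      rw [hGD, norm_smul]
      simp [abs_of_pos (inv_pos.mpr hn')]
    rw [h5, mul_pow]
    have hnn : (0:ℝ) ≤ ‖∑ i, (g i (x i) - g i xbar)‖ := norm_nonneg _
    have h6 : ‖∑ i, (g i (x i) - g i xbar)‖ ^ 2 ≤ (n : ℝ) * (L ^ 2 * ∑ i, ‖x i - xbar‖ ^ 2) := by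
      nlinarith
    calc ((n:ℝ)⁻¹) ^ 2 * ‖∑ i, (g i (x i) - g i xbar)‖ ^ 2
        ≤ ((n:ℝ)⁻¹) ^ 2 * ((n : ℝ) * (L ^ 2 * ∑ i, ‖x i - xbar‖ ^ 2)) := by
          apply mul_le_mul_of_nonneg_left h6 (by positivity)
      _ = L ^ 2 / n * ∑ i, ‖x i - xbar‖ ^ 2 := by
          field_simp
  -- bound ‖D‖²
  have h2 : ‖D‖ ^ 2 ≤ 2 * L * ((n : ℝ)⁻¹ * ∑ i, f i xbar - (n : ℝ)⁻¹ * ∑ i, f i xstar) := by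
    set y : EuclideanSpace ℝ (Fin p) := xbar - L⁻¹ • D with hy
    have hsm : ∀ i, f i y ≤ f i xbar + ⟪g i xbar, y - xbar⟫ + L / 2 * ‖y - xbar‖ ^ 2 :=
      fun i => hsmooth i xbar y
    have hsum : ∑ i, f i y ≤ ∑ i, f i xbar + ⟪∑ i, g i xbar, y - xbar⟫
        + (n : ℝ) * (L / 2 * ‖y - xbar‖ ^ 2) := by
      rw [sum_inner]
      calc ∑ i, f i y ≤ ∑ i, (f i xbar + ⟪g i xbar, y - xbar⟫ + L / 2 * ‖y - xbar‖ ^ 2) :=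
            Finset.sum_le_sum fun i _ => hsm i
        _ = ∑ i, f i xbar + ∑ i, ⟪g i xbar, y - xbar⟫ + (n : ℝ) * (L / 2 * ‖y - xbar‖ ^ 2) := by
            simp [Finset.sum_add_distrib, Finset.mul_sum]
    have hyx : y - xbar = -(L⁻¹ • D) := by rw [hy]; abel
    have hinner : ⟪∑ i, g i xbar, y - xbar⟫ = -(n : ℝ) * L⁻¹ * ‖D‖ ^ 2 := by
      have hsumD : (∑ i, g i xbar) = (n : ℝ) • D := by
        rw [hD, smul_smul, mul_inv_cancel₀ (ne_of_gt hn'), one_smul]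
      rw [hyx, hsumD, inner_neg_right, inner_smul_left, inner_smul_right,
        real_inner_self_eq_norm_sq]
      simp; ring
    have hnrm : ‖y - xbar‖ ^ 2 = L⁻¹ ^ 2 * ‖D‖ ^ 2 := by
      rw [hyx, norm_neg, norm_smul, mul_pow]
      simp [abs_of_pos (inv_pos.mpr hL)]
    have hFy : (n : ℝ)⁻¹ * ∑ i, f i y
        ≤ (n : ℝ)⁻¹ * ∑ i, f i xbar - 1 / (2 * L) * ‖D‖ ^ 2 := by
      have := hsum
      rw [hinner, hnrm] at this
      have h7 : (n:ℝ)⁻¹ * ∑ i, f i y ≤ (n:ℝ)⁻¹ * (∑ i, f i xbar + -(n : ℝ) * L⁻¹ * ‖D‖ ^ 2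
          + (n : ℝ) * (L / 2 * (L⁻¹ ^ 2 * ‖D‖ ^ 2))) :=
        mul_le_mul_of_nonneg_left this (by positivity)
      calc (n:ℝ)⁻¹ * ∑ i, f i y ≤ _ := h7
        _ = (n : ℝ)⁻¹ * ∑ i, f i xbar - 1 / (2 * L) * ‖D‖ ^ 2 := by
            field_simp; ring
    have hstar := hmin y
    have hLpos : (0:ℝ) < 2 * L := by linarith
    have key : 1 / (2 * L) * ‖D‖ ^ 2
        ≤ (n : ℝ)⁻¹ * ∑ i, f i xbar - (n : ℝ)⁻¹ * ∑ i, f i xstar := by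
      linarith [hstar.trans hFy]
    calc ‖D‖ ^ 2 = 2 * L * (1 / (2 * L) * ‖D‖ ^ 2) := by field_simp
      _ ≤ 2 * L * ((n : ℝ)⁻¹ * ∑ i, f i xbar - (n : ℝ)⁻¹ * ∑ i, f i xstar) :=
          mul_le_mul_of_nonneg_left key hLpos.le
  -- combine
  have htri : ‖G‖ ≤ ‖G - D‖ + ‖D‖ := by
    have h := norm_add_le (G - D) D
    rwa [sub_add_cancel] at h
  have hGsq : ‖G‖ ^ 2 ≤ 2 * ‖G - D‖ ^ 2 + 2 * ‖D‖ ^ 2 := by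
    nlinarith [htri, sq_nonneg (‖G - D‖ - ‖D‖), norm_nonneg G, norm_nonneg (G - D), norm_nonneg D]
  calc ‖G‖ ^ 2 ≤ 2 * ‖G - D‖ ^ 2 + 2 * ‖D‖ ^ 2 := hGsq
    _ ≤ 2 * (L ^ 2 / n * ∑ i, ‖x i - xbar‖ ^ 2)
        + 2 * (2 * L * ((n : ℝ)⁻¹ * ∑ i, f i xbar - (n : ℝ)⁻¹ * ∑ i, f i xstar)) := by
        have := mul_le_mul_of_nonneg_left h1 (by norm_num : (0:ℝ) ≤ 2)
        have := mul_le_mul_of_nonneg_left h2 (by norm_num : (0:ℝ) ≤ 2)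
        linarith [mul_le_mul_of_nonneg_left h1 (by norm_num : (0:ℝ) ≤ 2),
                  mul_le_mul_of_nonneg_left h2 (by norm_num : (0:ℝ) ≤ 2)]
    _ = 2 * L ^ 2 / n * ∑ i, ‖x i - xbar‖ ^ 2
        + 4 * L * ((n : ℝ)⁻¹ * ∑ i, f i xbar - (n : ℝ)⁻¹ * ∑ i, f i xstar) := by ring
end

section
/- Let each f_i : ℝ^p → ℝ be μ-strongly convex (μ ≥ 0) and L-smooth, and let f = (1/n)∑_{i=1}^n f_i with minimizer x*. Then for any points x_1,…,x_n with mean x̄, (1/n)∑_{i=1}^n ⟨x̄ - x*, ∇f_i(x_i)⟩ ≥ f(x̄) - f(x*) + (μ/2n)∑_{i=1}^n ‖x_i - x*‖² - (L/2n)∑_{i=1}^n ‖x_i - x̄‖². -/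
open scoped RealInnerProductSpace

/-!
Apply `L`-smoothness of `fᵢ` at `xᵢ` towards `x̄` and `μ`-strong convexity of `fᵢ` at `xᵢ`
towards `x*`; subtracting the two inequalities, the linear terms combine into
`⟪x̄ - x*, ∇fᵢ(xᵢ)⟫`. Averaging over `i` gives the claim.
-/

section

variable {E : Type*} [NormedAddCommGroup E] [InnerProductSpace ℝ E]

theorem sub_add_sq_sub_sq_le_inner_of_smooth_of_strongConvex {f : E → ℝ} {g : E → E}
    {μ L : ℝ} {x y z : E}
    (hsc : f x + ⟪g x, z - x⟫ + μ / 2 * ‖z - x‖ ^ 2 ≤ f z)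
    (hsmooth : f y ≤ f x + ⟪g x, y - x⟫ + L / 2 * ‖y - x‖ ^ 2) :
    f y - f z + μ / 2 * ‖x - z‖ ^ 2 - L / 2 * ‖x - y‖ ^ 2 ≤ ⟪y - z, g x⟫ := by
  have hinner : ⟪g x, y - x⟫ - ⟪g x, z - x⟫ = ⟪y - z, g x⟫ := by
    rw [← inner_sub_right, sub_sub_sub_cancel_right, real_inner_comm]
  rw [norm_sub_rev x z, norm_sub_rev x y]
  linarith

end

theorem stmt_4_general {p n : ℕ} (μ L : ℝ)
    (f : Fin n → EuclideanSpace ℝ (Fin p) → ℝ)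
    (g : Fin n → EuclideanSpace ℝ (Fin p) → EuclideanSpace ℝ (Fin p))
    (hsc : ∀ i x y, f i x + ⟪g i x, y - x⟫ + μ / 2 * ‖y - x‖ ^ 2 ≤ f i y)
    (hsmooth : ∀ i x y, f i y ≤ f i x + ⟪g i x, y - x⟫ + L / 2 * ‖y - x‖ ^ 2)
    (xstar : EuclideanSpace ℝ (Fin p))
    (x : Fin n → EuclideanSpace ℝ (Fin p))
    (xbar : EuclideanSpace ℝ (Fin p)) :
    (n : ℝ)⁻¹ * ∑ i, f i xbar - (n : ℝ)⁻¹ * ∑ i, f i xstar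
        + μ / (2 * n) * ∑ i, ‖x i - xstar‖ ^ 2
        - L / (2 * n) * ∑ i, ‖x i - xbar‖ ^ 2
      ≤ (n : ℝ)⁻¹ * ∑ i, ⟪xbar - xstar, g i (x i)⟫ := by
  have hsum := Finset.sum_le_sum fun i (_ : i ∈ Finset.univ) =>
    sub_add_sq_sub_sq_le_inner_of_smooth_of_strongConvex (hsc i (x i) xstar)
      (hsmooth i (x i) xbar)
  simp only [Finset.sum_sub_distrib, Finset.sum_add_distrib, ← Finset.mul_sum] at hsum
  have havg := mul_le_mul_of_nonneg_left hsum (inv_nonneg.2 (n.cast_nonneg : (0 : ℝ) ≤ n))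
  have hdiv : ∀ c : ℝ, c / (2 * n) = (n : ℝ)⁻¹ * (c / 2) := fun c => by ring
  rw [hdiv, hdiv]
  linarith

/-- Let each `fᵢ` be `μ`-strongly convex (`μ ≥ 0`) and `L`-smooth, and `x*` the minimizer of
`f = (1/n)∑ fᵢ`. Then for points `x₁,…,xₙ` with mean `x̄`,
`(1/n)∑ ⟨x̄ - x*, ∇fᵢ(xᵢ)⟩ ≥ f(x̄) - f(x*) + (μ/2n)∑ ‖xᵢ - x*‖² - (L/2n)∑ ‖xᵢ - x̄‖²`. -/
theorem stmt_4 {p n : ℕ} (hn : 0 < n) (μ L : ℝ) (hμ : 0 ≤ μ) (hL : 0 < L)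
    (f : Fin n → EuclideanSpace ℝ (Fin p) → ℝ)
    (g : Fin n → EuclideanSpace ℝ (Fin p) → EuclideanSpace ℝ (Fin p))
    (hsc : ∀ i x y, f i x + ⟪g i x, y - x⟫ + μ / 2 * ‖y - x‖ ^ 2 ≤ f i y)
    (hsmooth : ∀ i x y, f i y ≤ f i x + ⟪g i x, y - x⟫ + L / 2 * ‖y - x‖ ^ 2)
    (xstar : EuclideanSpace ℝ (Fin p))
    (hmin : ∀ y, (n : ℝ)⁻¹ * ∑ i, f i xstar ≤ (n : ℝ)⁻¹ * ∑ i, f i y)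
    (x : Fin n → EuclideanSpace ℝ (Fin p))
    (xbar : EuclideanSpace ℝ (Fin p)) (hxbar : xbar = (n : ℝ)⁻¹ • ∑ i, x i) :
    (n : ℝ)⁻¹ * ∑ i, f i xbar - (n : ℝ)⁻¹ * ∑ i, f i xstar
        + μ / (2 * n) * ∑ i, ‖x i - xstar‖ ^ 2
        - L / (2 * n) * ∑ i, ‖x i - xbar‖ ^ 2
      ≤ (n : ℝ)⁻¹ * ∑ i, ⟪xbar - xstar, g i (x i)⟫ :=
  stmt_4_general μ L f g hsc hsmooth xstar x xbar
end

section
/- Let (u_k) and (v_k) be nonnegative sequences and ρ ∈ [0,1), and suppose for all k: u_{k+1} ≤ ((1+ρ)/2) u_k + a v_k + b and v_{k+1} ≤ ((3+ρ)/4) v_k + c u_k + d, with a,b,c,d ≥ 0 and (8a/(1-ρ))·(4c/(1-ρ)) ≤ 1/2. Then for all K ≥ 1, (1/K)∑_{k=0}^{K-1} u_k ≤ (4u_0)/((1-ρ)K) + (16 a v_0)/((1-ρ)² K) + (4b/(1-ρ)) + (32 a d)/((1-ρ)²). -/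
set_option maxHeartbeats 1000000 in
/-- Decoupling of two mutually dependent contraction recursions: if
`u_{k+1} ≤ ((1+ρ)/2)u_k + a v_k + b` and `v_{k+1} ≤ ((3+ρ)/4)v_k + c u_k + d` with
`ρ ∈ [0,1)`, `a,b,c,d ≥ 0`, and `(8a/(1-ρ))·(4c/(1-ρ)) ≤ 1/2`, then for all `K ≥ 1`,
`(1/K)∑ u_k ≤ 4u₀/((1-ρ)K) + 16av₀/((1-ρ)²K) + 4b/(1-ρ) + 32ad/(1-ρ)²`. -/
theorem stmt_17 (u v : ℕ → ℝ) (ρ a b c d : ℝ)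
    (hρ0 : 0 ≤ ρ) (hρ1 : ρ < 1)
    (ha : 0 ≤ a) (hb : 0 ≤ b) (hc : 0 ≤ c) (hd : 0 ≤ d)
    (hu : ∀ k, 0 ≤ u k) (hv : ∀ k, 0 ≤ v k)
    (hcouple : 8 * a / (1 - ρ) * (4 * c / (1 - ρ)) ≤ 1 / 2)
    (hrecu : ∀ k, u (k + 1) ≤ (1 + ρ) / 2 * u k + a * v k + b)
    (hrecv : ∀ k, v (k + 1) ≤ (3 + ρ) / 4 * v k + c * u k + d) :
    ∀ K : ℕ, 1 ≤ K →
      (1 / K : ℝ) * ∑ k ∈ Finset.range K, u k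
        ≤ 4 * u 0 / ((1 - ρ) * K) + 16 * a * v 0 / ((1 - ρ) ^ 2 * K)
          + 4 * b / (1 - ρ) + 32 * a * d / (1 - ρ) ^ 2 := by
  have he : (0:ℝ) < 1 - ρ := by linarith
  have hene : (1 - ρ) ≠ 0 := ne_of_gt he
  have hac : 64 * a * c ≤ (1 - ρ) ^ 2 := by
    rw [div_mul_div_comm, div_le_div_iff₀ (by positivity) two_pos] at hcouple
    nlinarith
  intro K hK
  have hK0 : (0:ℝ) < K := by exact_mod_cast hK
  have hKne : (K:ℝ) ≠ 0 := ne_of_gt hK0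
  set Su := ∑ k ∈ Finset.range K, u k with hSu
  set Sv := ∑ k ∈ Finset.range K, v k with hSv
  have hSu0 : 0 ≤ Su := Finset.sum_nonneg fun i _ => hu i
  have hSv0 : 0 ≤ Sv := Finset.sum_nonneg fun i _ => hv i
  -- summed recursions
  have tsum_u : Su + u K - u 0 = ∑ k ∈ Finset.range K, u (k + 1) := by
    have := Finset.sum_range_succ' u K
    have h2 := Finset.sum_range_succ u K
    rw [h2] at this
    linarith [this]
  have tsum_v : Sv + v K - v 0 = ∑ k ∈ Finset.range K, v (k + 1) := by
    have := Finset.sum_range_succ' v K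
    have h2 := Finset.sum_range_succ v K
    rw [h2] at this
    linarith [this]
  have h1 : Su + u K - u 0 ≤ (1 + ρ) / 2 * Su + a * Sv + K * b := by
    rw [tsum_u]
    calc ∑ k ∈ Finset.range K, u (k + 1)
        ≤ ∑ k ∈ Finset.range K, ((1 + ρ) / 2 * u k + a * v k + b) :=
          Finset.sum_le_sum fun i _ => hrecu i
      _ = (1 + ρ) / 2 * Su + a * Sv + K * b := by
          simp [Finset.sum_add_distrib, ← Finset.mul_sum, ← Finset.sum_mul, hSu, hSv, mul_comm]
  have h2 : Sv + v K - v 0 ≤ (3 + ρ) / 4 * Sv + c * Su + K * d := by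
    rw [tsum_v]
    calc ∑ k ∈ Finset.range K, v (k + 1)
        ≤ ∑ k ∈ Finset.range K, ((3 + ρ) / 4 * v k + c * u k + d) :=
          Finset.sum_le_sum fun i _ => hrecv i
      _ = (3 + ρ) / 4 * Sv + c * Su + K * d := by
          simp [Finset.sum_add_distrib, ← Finset.mul_sum, ← Finset.sum_mul, hSu, hSv, mul_comm]
  have e1 : (1 - ρ) * Su ≤ 2 * u 0 + 2 * a * Sv + 2 * K * b := by
    have := hu K; linarith
  have e2 : (1 - ρ) * Sv ≤ 4 * v 0 + 4 * c * Su + 4 * K * d := by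
    have := hv K; linarith
  have key : (1 - ρ) ^ 2 * Su ≤
      4 * (1 - ρ) * u 0 + 16 * a * v 0 + 16 * a * K * d + 4 * (1 - ρ) * K * b := by
    nlinarith [mul_le_mul_of_nonneg_left e2 ha, mul_le_mul_of_nonneg_left e1 he.le,
      mul_le_mul_of_nonneg_right hac hSu0, hSu0, hSv0, mul_nonneg hb hK0.le,
      mul_nonneg hd hK0.le, mul_nonneg ha (mul_nonneg hd hK0.le), hu 0, hv 0,
      mul_nonneg he.le (hu 0), mul_nonneg ha (hv 0)]
  have heq : 4 * u 0 / ((1 - ρ) * K) + 16 * a * v 0 / ((1 - ρ) ^ 2 * K)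
      + 4 * b / (1 - ρ) + 32 * a * d / (1 - ρ) ^ 2
      = (4 * (1 - ρ) * u 0 + 16 * a * v 0 + 32 * a * K * d + 4 * (1 - ρ) * K * b)
        / ((1 - ρ) ^ 2 * K) := by
    field_simp
    ring
  rw [heq]
  have hmain : (1 / K : ℝ) * Su ≤
      (4 * (1 - ρ) * u 0 + 16 * a * v 0 + 16 * a * K * d + 4 * (1 - ρ) * K * b)
        / ((1 - ρ) ^ 2 * K) := by
    rw [le_div_iff₀ (by positivity)]
    have h1K : (1 / K : ℝ) * Su * ((1 - ρ) ^ 2 * K) = (1 - ρ) ^ 2 * Su := by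
      field_simp
    rw [h1K]; linarith
  refine hmain.trans ?_
  apply div_le_div_of_nonneg_right ?_ (by positivity)
  nlinarith [mul_nonneg (mul_nonneg ha hK0.le) hd]
end
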